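/- arXiv:2308.04708 — 5 statements merged into one kernel-verified Lean document; each statement's English description precedes it below -/
import Mathlib

section
/- Let f : ℝ^M → ℝ, let x^(1), …, x^(N) ∈ ℝ^M be sample points, and let ν ≥ 0. For every coefficient vector β ∈ ℝ^M and every y ∈ ℝ define the partially minimized LIME-for-deviation objective G(β, y) = inf over β₀ ∈ ℝ of [ (1/N) Σ_{n=1}^N (f(x^(n)) − y − β₀ − βᵀx^(n))² + ν‖β‖₁ ]. Then G(β, y) = G(β, y′) for all y, y′ ∈ ℝ; consequently the set of coefficient vectors β that minimize the lasso objective (jointly over β₀ and β) does not depend on the observed output y, i.e., LIME applied to the deviation function is deviation-agnostic. -/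
open Finset

lemma shift_L (M N : ℕ) (f : (Fin M → ℝ) → ℝ) (x : Fin N → Fin M → ℝ) (ν : ℝ)
    (L : ℝ → (Fin M → ℝ) → ℝ → ℝ)
    (hL : ∀ (β₀ : ℝ) (β : Fin M → ℝ) (y : ℝ), L β₀ β y =
      (1 / N : ℝ) * ∑ n : Fin N, (f (x n) - y - β₀ - ∑ i : Fin M, β i * x n i) ^ 2
        + ν * ∑ i : Fin M, |β i|)
    (β₀ : ℝ) (β : Fin M → ℝ) (y y' : ℝ) :
    L (β₀ + (y - y')) β y' = L β₀ β y := by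
  rw [hL, hL]
  congr 2
  apply Finset.sum_congr rfl
  intro n _
  ring

/-- LIME applied to the deviation function is deviation-agnostic: the partially
minimized lasso objective `G(β, y)` does not depend on the observed output `y`,
and consequently the set of minimizing coefficient vectors `β` is independent of `y`. -/
theorem stmt_0 (M N : ℕ) (hN : 0 < N) (f : (Fin M → ℝ) → ℝ)
    (x : Fin N → Fin M → ℝ) (ν : ℝ) (hν : 0 ≤ ν)
    (L : ℝ → (Fin M → ℝ) → ℝ → ℝ)
    (hL : ∀ (β₀ : ℝ) (β : Fin M → ℝ) (y : ℝ), L β₀ β y =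
      (1 / N : ℝ) * ∑ n : Fin N, (f (x n) - y - β₀ - ∑ i : Fin M, β i * x n i) ^ 2
        + ν * ∑ i : Fin M, |β i|)
    (G : (Fin M → ℝ) → ℝ → ℝ)
    (hG : ∀ (β : Fin M → ℝ) (y : ℝ), G β y = ⨅ β₀ : ℝ, L β₀ β y) :
    (∀ (β : Fin M → ℝ) (y y' : ℝ), G β y = G β y') ∧
    (∀ y y' : ℝ,
      {β : Fin M → ℝ | ∃ β₀ : ℝ, ∀ (β₀' : ℝ) (β' : Fin M → ℝ), L β₀ β y ≤ L β₀' β' y} =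
      {β : Fin M → ℝ | ∃ β₀ : ℝ, ∀ (β₀' : ℝ) (β' : Fin M → ℝ), L β₀ β y' ≤ L β₀' β' y'}) := by
  have key := shift_L M N f x ν L hL
  constructor
  · intro β y y'
    rw [hG, hG]
    have : (fun β₀ : ℝ => L β₀ β y) = (fun β₀ : ℝ => L β₀ β y') ∘ (Equiv.addRight (y - y')) := by
      funext β₀
      simp [Equiv.addRight, key β₀ β y y']
    rw [this]
    exact (Equiv.addRight (y - y')).iInf_comp (g := fun β₀ => L β₀ β y')
  · have main : ∀ y y' : ℝ,
        {β : Fin M → ℝ | ∃ β₀ : ℝ, ∀ (β₀' : ℝ) (β' : Fin M → ℝ), L β₀ β y ≤ L β₀' β' y} ⊆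
        {β : Fin M → ℝ | ∃ β₀ : ℝ, ∀ (β₀' : ℝ) (β' : Fin M → ℝ), L β₀ β y' ≤ L β₀' β' y'} := by
      intro y y' β ⟨β₀, hβ₀⟩
      refine ⟨β₀ + (y - y'), fun β₀' β' => ?_⟩
      rw [key β₀ β y y']
      calc L β₀ β y ≤ L (β₀' + (y' - y)) β' y := hβ₀ _ _
        _ = L β₀' β' y' := by rw [← key β₀' β' y' y]
    exact fun y y' => le_antisymm (main y y') (main y' y)
end

section
/- Let f : ℝ^M → ℝ be differentiable, let μ be a probability measure on ℝ^M × ℝ with first marginal μ_X on ℝ^M, and let (x^t, y^t) ∈ ℝ^M × ℝ. Assume the function (x⁰, y⁰) ↦ IG_i(x^t, y^t | x⁰, y⁰) is μ-integrable. Then the expected integrated gradient of the deviation function, EIG_i(x^t, y^t) = ∫ IG_i(x^t, y^t | x⁰, y⁰) dμ(x⁰, y⁰), satisfies EIG_i(x^t, y^t) = ∫ IG_i(x^t | x⁰) dμ_X(x⁰) for every i = 1, …, M; in particular EIG applied to the deviation function is independent of y^t (deviation-agnostic). -/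
open MeasureTheory

/-- The expected integrated gradient of the deviation function `F(x, y) = f(x) − y`,
integrated over a distribution `μ` of baseline points `(x⁰, y⁰)`, equals the expected
integrated gradient of `f` over the first marginal `μ.map Prod.fst`; in particular it
is independent of the observed output `yᵗ` (deviation-agnostic). -/
theorem stmt_2 (M : ℕ) (f : (Fin M → ℝ) → ℝ) (hf : Differentiable ℝ f)
    (F : (Fin M → ℝ) × ℝ → ℝ) (hF : ∀ p : (Fin M → ℝ) × ℝ, F p = f p.1 - p.2)
    (μ : Measure ((Fin M → ℝ) × ℝ)) [IsProbabilityMeasure μ]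
    (xt : Fin M → ℝ) (yt : ℝ) (i : Fin M)
    (hint : Integrable (fun p : (Fin M → ℝ) × ℝ =>
      (xt i - p.1 i) *
        ∫ α in (0:ℝ)..1,
          fderiv ℝ F (p.1 + α • (xt - p.1), p.2 + α * (yt - p.2)) (Pi.single i 1, 0)) μ) :
    (∫ p : (Fin M → ℝ) × ℝ,
        (xt i - p.1 i) *
          (∫ α in (0:ℝ)..1,
            fderiv ℝ F (p.1 + α • (xt - p.1), p.2 + α * (yt - p.2)) (Pi.single i 1, 0)) ∂μ) =
      ∫ x0 : Fin M → ℝ,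
        (xt i - x0 i) *
          (∫ α in (0:ℝ)..1, fderiv ℝ f (x0 + α • (xt - x0)) (Pi.single i 1))
        ∂(μ.map Prod.fst) := by
  have hFeq : F = fun p : (Fin M → ℝ) × ℝ => f p.1 - p.2 := funext hF
  -- key pointwise derivative identity
  have key : ∀ (a : Fin M → ℝ) (b : ℝ) (v : Fin M → ℝ),
      fderiv ℝ F (a, b) (v, 0) = fderiv ℝ f a v := by
    intro a b v
    have h1 : HasFDerivAt F
        ((fderiv ℝ f a).comp (ContinuousLinearMap.fst ℝ (Fin M → ℝ) ℝ)
          - ContinuousLinearMap.snd ℝ (Fin M → ℝ) ℝ) (a, b) := by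
      rw [hFeq]
      exact ((hf a).hasFDerivAt.comp (a, b) hasFDerivAt_fst).sub hasFDerivAt_snd
    rw [h1.fderiv]
    simp
  -- measurability of the target integrand
  have hm : StronglyMeasurable (fun x0 : Fin M → ℝ =>
      (xt i - x0 i) * ∫ α in (0:ℝ)..1, fderiv ℝ f (x0 + α • (xt - x0)) (Pi.single i 1)) := by
    have h2 : Measurable (fun q : (Fin M → ℝ) × ℝ =>
        fderiv ℝ f (q.1 + q.2 • (xt - q.1)) (Pi.single i 1)) := by
      have hc : Continuous (fun q : (Fin M → ℝ) × ℝ => q.1 + q.2 • (xt - q.1)) := by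
        fun_prop
      exact (measurable_fderiv_apply_const ℝ f (Pi.single i 1)).comp hc.measurable
    have h3 : StronglyMeasurable (fun x0 : Fin M → ℝ =>
        ∫ α, fderiv ℝ f (x0 + α • (xt - x0)) (Pi.single i 1)
          ∂(volume.restrict (Set.Ioc (0:ℝ) 1))) :=
      h2.stronglyMeasurable.integral_prod_right'
    have h4 : (fun x0 : Fin M → ℝ =>
        (xt i - x0 i) * ∫ α in (0:ℝ)..1, fderiv ℝ f (x0 + α • (xt - x0)) (Pi.single i 1)) =
        fun x0 => (xt i - x0 i) * ∫ α, fderiv ℝ f (x0 + α • (xt - x0)) (Pi.single i 1)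
          ∂(volume.restrict (Set.Ioc (0:ℝ) 1)) := by
      funext x0
      rw [intervalIntegral.integral_of_le (by norm_num : (0:ℝ) ≤ 1)]
    rw [h4]
    exact ((measurable_const.sub (measurable_pi_apply i)).stronglyMeasurable).mul h3
  rw [integral_map measurable_fst.aemeasurable hm.aestronglyMeasurable]
  congr 1
  funext p
  congr 1
  apply intervalIntegral.integral_congr
  intro α _
  exact key _ _ _
end

section
/- Let f : ℝ^M → ℝ be continuously differentiable, let P be a probability measure on ℝ^M such that f is P-integrable and each x⁰ ↦ IG_i(x^t | x⁰) is P-integrable. Then the expected integrated gradient EIG_i(x^t) = ∫ IG_i(x^t | x⁰) dP(x⁰) satisfies the sum rule Σ_{i=1}^M EIG_i(x^t) = f(x^t) − ⟨f⟩, where ⟨f⟩ = ∫ f(x) dP(x). -/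
/-!
Along the segment `γ(α) = x⁰ + α (xᵗ - x⁰)` the fundamental theorem of calculus gives
`f xᵗ - f x⁰ = ∫₀¹ Df(γ α) (xᵗ - x⁰) dα`, and expanding `xᵗ - x⁰` in the standard basis splits
this integral into the integrated gradients, so they sum to `f xᵗ - f x⁰` for every baseline.
Integrating this identity against the baseline distribution `P` gives the sum rule.
-/

open MeasureTheory

section Segment

variable {E F : Type*} [NormedAddCommGroup E] [NormedSpace ℝ E]
  [NormedAddCommGroup F] [NormedSpace ℝ F] {f : E → F}

theorem ContDiff.continuous_fderiv_segment_apply (hf : ContDiff ℝ 1 f) (x y v : E) :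
    Continuous fun α : ℝ => fderiv ℝ f (x + α • (y - x)) v :=
  ((hf.continuous_fderiv one_ne_zero).comp (by fun_prop)).clm_apply continuous_const

theorem ContDiff.integral_fderiv_segment_eq_sub [CompleteSpace F] (hf : ContDiff ℝ 1 f)
    (x y : E) :
    ∫ α in (0 : ℝ)..1, fderiv ℝ f (x + α • (y - x)) (y - x) = f y - f x := by
  have hγ (α : ℝ) : HasDerivAt (fun α : ℝ => x + α • (y - x)) (y - x) α := by
    simpa using ((hasDerivAt_id α).smul_const (y - x)).const_add x
  rw [intervalIntegral.integral_eq_sub_of_hasDerivAt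
    (fun α _ => (hf.differentiable one_ne_zero _).hasFDerivAt.comp_hasDerivAt α (hγ α))
    ((hf.continuous_fderiv_segment_apply x y (y - x)).intervalIntegrable 0 1)]
  simp

end Segment

theorem ContinuousLinearMap.sum_mul_apply_single {ι : Type*} [Fintype ι] [DecidableEq ι]
    (L : (ι → ℝ) →L[ℝ] ℝ) (v : ι → ℝ) :
    ∑ i, v i * L (Pi.single i 1) = L v := by
  conv_rhs => rw [pi_eq_sum_univ' v, map_sum]
  simp

section IntegratedGradient

variable {ι : Type*} [Fintype ι] [DecidableEq ι]

/-- `IG_i(xᵗ | x⁰)` in the notation of the statement. -/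
noncomputable def integratedGradient (f : (ι → ℝ) → ℝ) (xt x0 : ι → ℝ) (i : ι) : ℝ :=
  (xt i - x0 i) * ∫ α in (0 : ℝ)..1, fderiv ℝ f (x0 + α • (xt - x0)) (Pi.single i 1)

theorem sum_integratedGradient {f : (ι → ℝ) → ℝ} (hf : ContDiff ℝ 1 f) (xt x0 : ι → ℝ) :
    ∑ i, integratedGradient f xt x0 i = f xt - f x0 := by
  calc ∑ i, integratedGradient f xt x0 i
      = ∫ α in (0 : ℝ)..1,
          ∑ i, (xt i - x0 i) * fderiv ℝ f (x0 + α • (xt - x0)) (Pi.single i 1) := by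
        simp_rw [integratedGradient, ← intervalIntegral.integral_const_mul]
        refine (intervalIntegral.integral_finsetSum fun i _ => ?_).symm
        exact (continuous_const.mul
          (hf.continuous_fderiv_segment_apply x0 xt _)).intervalIntegrable 0 1
    _ = ∫ α in (0 : ℝ)..1, fderiv ℝ f (x0 + α • (xt - x0)) (xt - x0) := by
        simp_rw [← Pi.sub_apply xt x0, ContinuousLinearMap.sum_mul_apply_single]
    _ = f xt - f x0 := hf.integral_fderiv_segment_eq_sub x0 xt

end IntegratedGradient

/-- Sum rule for the expected integrated gradient: for a continuously differentiable
`f` and a baseline distribution `P`, the EIG attributions sum to `f(xᵗ) − ⟨f⟩`,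
where `⟨f⟩ = ∫ f dP`. -/
theorem stmt_5 (M : ℕ) (f : (Fin M → ℝ) → ℝ) (hf : ContDiff ℝ 1 f)
    (P : Measure (Fin M → ℝ)) [IsProbabilityMeasure P] (xt : Fin M → ℝ)
    (hfint : Integrable f P)
    (hIGint : ∀ i : Fin M, Integrable (fun x0 : Fin M → ℝ =>
      (xt i - x0 i) *
        ∫ α in (0:ℝ)..1, fderiv ℝ f (x0 + α • (xt - x0)) (Pi.single i 1)) P) :
    ∑ i : Fin M, ∫ x0 : Fin M → ℝ,
        (xt i - x0 i) *
          (∫ α in (0:ℝ)..1, fderiv ℝ f (x0 + α • (xt - x0)) (Pi.single i 1)) ∂P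
      = f xt - ∫ x : Fin M → ℝ, f x ∂P := by
  change ∑ i, ∫ x0, integratedGradient f xt x0 i ∂P = _
  rw [← integral_finsetSum (f := fun i x0 => integratedGradient f xt x0 i) _ fun i _ => hIGint i]
  simp_rw [sum_integratedGradient hf xt]
  rw [integral_sub (integrable_const _) hfint, integral_const, probReal_univ, one_smul]
end

section
/- Let P = P_1 ⊗ ⋯ ⊗ P_M be a product probability measure on ℝ^M whose coordinate marginals have finite second moments, and let f : ℝ^M → ℝ be a quadratic function f(x) = c + bᵀx + xᵀA x with A a symmetric M×M real matrix, b ∈ ℝ^M, c ∈ ℝ. For x^t ∈ ℝ^M define the coalition values v(T) = ∫ f(x_T^t, z) d(⊗_{j∉T} P_j)(z), the Shapley values SV_i(x^t) = (1/M) Σ_{k=0}^{M−1} C(M−1,k)^{−1} Σ_{S ⊆ {1,…,M}\{i}, |S|=k} ( v(S∪{i}) − v(S) ), and the expected integrated gradient EIG_i(x^t) = ∫ (x_i^t − z_i) [∫₀¹ (∂f/∂x_i)(z + α(x^t − z)) dα] dP(z). Then SV_i(x^t) = EIG_i(x^t) for every i = 1, …, M and every x^t ∈ ℝ^M; that is,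 the Shapley value is equivalent to the expected integrated gradient up to second order of the power expansion of f. -/
/-!
For a baseline `z`, write `T.piecewise xᵗ z` for the point that agrees with `xᵗ` on `T` and with
`z` off `T`. Since `v(T)` is the expectation over `z ~ P` of `f(T.piecewise xᵗ z)`, the Shapley
value `SVᵢ` is the expectation of the Shapley value of the baseline game
`T ↦ f(T.piecewise xᵗ z)`, while `EIGᵢ` is the expectation of `IGᵢ(xᵗ | z)`; it suffices that the
two agree for every `z`. For quadratic `f` the marginal contribution of `i` to `S` is affine in
the indicator of `S`, with coefficient `(xᵢ - zᵢ)(Aᵢⱼ + Aⱼᵢ)(xⱼ - zⱼ)` at `j`, and the Shapley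
weights give each `j ≠ i` membership weight `1/2`. On the other side `∂ᵢf` is affine along the
segment from `z` to `xᵗ`, so its mean over the segment is its value at the midpoint.
-/

open MeasureTheory Finset

section Combinatorics
variable {α : Type*} [DecidableEq α]

lemma card_mul_card_filter_mem_powersetCard {t : Finset α} {j : α} (hj : j ∈ t) (k : ℕ) :
    #t * #{S ∈ t.powersetCard k | j ∈ S} = k * (#t).choose k := by
  cases k with
  | zero => simp [powersetCard_zero]
  | succ k =>
    obtain ⟨n, hn⟩ : ∃ n, #t = n + 1 := Nat.exists_eq_succ_of_ne_zero (card_ne_zero_of_mem hj)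
    have hcount := card_filter_powersetCard_subset {j} t (k + 1) (singleton_subset_iff.2 hj)
      (by simp)
    simp only [singleton_subset_iff, card_singleton, hn, Nat.add_sub_cancel] at hcount
    rw [hcount, hn, Nat.add_one_mul_choose_eq, mul_comm]

lemma card_mul_sum_powersetCard_sum (t : Finset α) (k : ℕ) (c : α → ℝ) :
    (#t : ℝ) * ∑ S ∈ t.powersetCard k, ∑ j ∈ S, c j = k * (#t).choose k * ∑ j ∈ t, c j := by
  have hswap : ∑ S ∈ t.powersetCard k, ∑ j ∈ S, c j
      = ∑ j ∈ t, #{S ∈ t.powersetCard k | j ∈ S} * c j := by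
    rw [sum_comm' (t' := t) (s' := fun j => {S ∈ t.powersetCard k | j ∈ S})]
    · simp
    · intro S j
      simp only [mem_powersetCard, mem_filter]
      exact ⟨fun ⟨h, hj⟩ => ⟨⟨h, hj⟩, h.1 hj⟩, fun ⟨⟨h, hj⟩, _⟩ => ⟨h, hj⟩⟩
  rw [hswap, mul_sum, mul_sum]
  refine sum_congr rfl fun j hj => ?_
  rw [← mul_assoc]
  congr 1
  exact_mod_cast card_mul_card_filter_mem_powersetCard hj k

-- A uniformly random `k`-subset of `t` contains a given `j ∈ t` with probability `k / #t`,
-- and `k / #t` averages to `1 / 2` over `k = 0, …, #t`.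
lemma sum_range_choose_inv_mul_sum_powersetCard (t : Finset α) (K : ℝ) (c : α → ℝ) :
    ∑ k ∈ range (#t + 1), ((#t).choose k : ℝ)⁻¹ * ∑ S ∈ t.powersetCard k, (K + ∑ j ∈ S, c j)
      = (#t + 1) * (K + 1 / 2 * ∑ j ∈ t, c j) := by
  rcases t.eq_empty_or_nonempty with rfl | ht
  · simp
  have hn : (#t : ℝ) ≠ 0 := by exact_mod_cast ht.card_pos.ne'
  have hterm : ∀ k ∈ range (#t + 1),
      ((#t).choose k : ℝ)⁻¹ * ∑ S ∈ t.powersetCard k, (K + ∑ j ∈ S, c j)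
        = K + k / #t * ∑ j ∈ t, c j := by
    intro k hk
    have hC : ((#t).choose k : ℝ) ≠ 0 :=
      Nat.cast_ne_zero.2 (Nat.choose_pos (Nat.lt_succ_iff.1 (mem_range.1 hk))).ne'
    rw [sum_add_distrib, sum_const, card_powersetCard, nsmul_eq_mul]
    field_simp
    linear_combination card_mul_sum_powersetCard_sum t k c
  have hgauss : ∑ k ∈ range (#t + 1), (k : ℝ) = (#t + 1) * #t / 2 := by
    have h := congrArg (Nat.cast : ℕ → ℝ) (sum_range_id_mul_two (#t + 1))
    push_cast at h
    linarith
  rw [sum_congr rfl hterm, sum_add_distrib, sum_const, card_range, nsmul_eq_mul, ← sum_mul,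
    ← sum_div, hgauss]
  push_cast
  field_simp

end Combinatorics

section Shapley
variable {ι : Type*} [Fintype ι] [DecidableEq ι]

noncomputable def shapleyValue (u : Finset ι → ℝ) (i : ι) : ℝ :=
  (1 / Fintype.card ι : ℝ) * ∑ k ∈ range (Fintype.card ι),
    ((Fintype.card ι - 1).choose k : ℝ)⁻¹ *
      ∑ S ∈ (univ.erase i).powerset.filter (fun S => S.card = k), (u (insert i S) - u S)

lemma shapleyValue_eq_of_sub_eq_add_sum {u : Finset ι → ℝ} {i : ι} (K : ℝ) (c : ι → ℝ)
    (hu : ∀ S ⊆ univ.erase i, u (insert i S) - u S = K + ∑ j ∈ S, c j) :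
    shapleyValue u i = K + 1 / 2 * ∑ j ∈ univ.erase i, c j := by
  have hcard : Fintype.card ι = #(univ.erase i) + 1 := by
    rw [card_erase_of_mem (mem_univ i), card_univ, Nat.sub_add_cancel (Fintype.card_pos_iff.2 ⟨i⟩)]
  have hsum : ∀ k, ∑ S ∈ (univ.erase i).powerset.filter (fun S => S.card = k),
      (u (insert i S) - u S) = ∑ S ∈ (univ.erase i).powersetCard k, (K + ∑ j ∈ S, c j) := by
    intro k
    rw [← powersetCard_eq_filter]
    exact sum_congr rfl fun S hS => hu S (mem_powersetCard.1 hS).1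
  simp only [shapleyValue, hsum, hcard, Nat.add_sub_cancel,
    sum_range_choose_inv_mul_sum_powersetCard]
  push_cast
  field_simp

lemma shapleyValue_integral {Ω : Type*} [MeasurableSpace Ω] {P : Measure Ω}
    (u : Ω → Finset ι → ℝ) (hu : ∀ T, Integrable (fun ω => u ω T) P) (i : ι) :
    shapleyValue (fun T => ∫ ω, u ω T ∂P) i = ∫ ω, shapleyValue (u ω) i ∂P := by
  have hmarg : ∀ S, Integrable (fun ω => u ω (insert i S) - u ω S) P :=
    fun S => (hu _).sub (hu S)
  simp only [shapleyValue, ← integral_sub (hu _) (hu _),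
    ← integral_finsetSum _ fun S _ => hmarg S, ← integral_const_mul]
  rw [← integral_finsetSum _ fun k _ => (integrable_finsetSum _ fun S _ => hmarg S).const_mul _,
    integral_const_mul]

end Shapley

section Quadratic
variable {ι : Type*} [Fintype ι]

def quadratic (A : Matrix ι ι ℝ) (b : ι → ℝ) (c : ℝ) (x : ι → ℝ) : ℝ :=
  c + ∑ i, b i * x i + ∑ i, ∑ j, A i j * x i * x j

variable (A : Matrix ι ι ℝ) (b : ι → ℝ) (c : ℝ)

lemma integrable_quadratic_comp {Ω : Type*} [MeasurableSpace Ω] {P : Measure Ω}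
    [IsFiniteMeasure P] {y : Ω → ι → ℝ} (hy : ∀ j, MemLp (fun ω => y ω j) 2 P) :
    Integrable (fun ω => quadratic A b c (y ω)) P := by
  refine ((integrable_const c).add (integrable_finsetSum _ fun j _ =>
    ((hy j).integrable one_le_two).const_mul (b j))).add
    (integrable_finsetSum _ fun j _ => integrable_finsetSum _ fun k _ => ?_)
  simpa only [Pi.mul_apply, mul_assoc] using ((hy j).integrable_mul (hy k)).const_mul (A j k)

variable [DecidableEq ι]

lemma quadratic_update_sub (y : ι → ℝ) (i : ι) (a : ℝ) :
    quadratic A b c (Function.update y i a) - quadratic A b c y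
      = (a - y i) * (b i + ∑ j, (A i j + A j i) * y j + A i i * (a - y i)) := by
  have hy : Function.update y i a = fun j => y j + if j = i then a - y i else 0 := by
    ext j; by_cases h : j = i <;> simp [h]
  rw [hy]
  simp only [quadratic, mul_add, add_mul, sum_add_distrib, mul_ite, ite_mul, mul_zero, zero_mul,
    sum_ite_irrel, sum_const_zero, sum_ite_eq', mem_univ, if_true, mul_sum]
  ring_nf

lemma quadratic_piecewise_insert_sub (x z : ι → ℝ) {i : ι} {S : Finset ι} (hi : i ∉ S) :
    quadratic A b c ((insert i S).piecewise x z) - quadratic A b c (S.piecewise x z)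
      = (x i - z i) * (b i + ∑ j, (A i j + A j i) * z j + A i i * (x i - z i))
        + ∑ j ∈ S, (x i - z i) * ((A i j + A j i) * (x j - z j)) := by
  have hsplit : ∀ j, (A i j + A j i) * S.piecewise x z j
      = (A i j + A j i) * z j + if j ∈ S then (A i j + A j i) * (x j - z j) else 0 := by
    intro j
    by_cases hj : j ∈ S
    · rw [piecewise_eq_of_mem _ _ _ hj, if_pos hj]
      ring
    · rw [piecewise_eq_of_notMem _ _ _ hj, if_neg hj, add_zero]
  rw [piecewise_insert, quadratic_update_sub, piecewise_eq_of_notMem _ _ _ hi, sum_congr rfl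
    fun j _ => hsplit j, sum_add_distrib, sum_ite_mem, univ_inter, ← mul_sum]
  ring

lemma shapleyValue_quadratic_piecewise (x z : ι → ℝ) (i : ι) :
    shapleyValue (fun T => quadratic A b c (T.piecewise x z)) i
      = (x i - z i) * (b i + 1 / 2 * ∑ j, (A i j + A j i) * (x j + z j)) := by
  rw [shapleyValue_eq_of_sub_eq_add_sum _ _ fun S hS =>
    quadratic_piecewise_insert_sub A b c x z fun hi => by simpa using hS hi]
  have hsum : ∑ j, (A i j + A j i) * (x j + z j)
      = 2 * ∑ j, (A i j + A j i) * z j + ∑ j, (A i j + A j i) * (x j - z j) := by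
    rw [mul_sum, ← sum_add_distrib]
    exact sum_congr rfl fun j _ => by ring
  rw [← mul_sum, sum_erase_eq_sub (mem_univ i), hsum]
  ring

lemma fderiv_quadratic_apply_single (y : ι → ℝ) (i : ι) :
    fderiv ℝ (quadratic A b c) y (Pi.single i 1) = b i + ∑ j, (A i j + A j i) * y j := by
  have hdiff : DifferentiableAt ℝ (quadratic A b c) y := by
    unfold quadratic
    fun_prop
  have hline : ∀ t : ℝ, quadratic A b c (y + t • Pi.single i 1) = quadratic A b c y
      + t * (b i + ∑ j, (A i j + A j i) * y j + A i i * t) := by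
    intro t
    have hupd : y + t • Pi.single i 1 = Function.update y i (y i + t) := by
      ext j
      by_cases hj : j = i <;> simp [hj]
    rw [← sub_eq_iff_eq_add', hupd, quadratic_update_sub, add_sub_cancel_left]
  have hderiv : HasLineDerivAt ℝ (quadratic A b c) (b i + ∑ j, (A i j + A j i) * y j) y
      (Pi.single i 1) := by
    unfold HasLineDerivAt
    simp only [hline]
    simpa using ((hasDerivAt_id (0 : ℝ)).mul (((hasDerivAt_id (0 : ℝ)).const_mul (A i i)).const_add
      (b i + ∑ j, (A i j + A j i) * y j))).const_add (quadratic A b c y)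
  rw [← hdiff.lineDeriv_eq_fderiv, hderiv.lineDeriv]

lemma integral_fderiv_quadratic_segment (x z : ι → ℝ) (i : ι) :
    ∫ α in (0 : ℝ)..1, fderiv ℝ (quadratic A b c) (z + α • (x - z)) (Pi.single i 1)
      = b i + 1 / 2 * ∑ j, (A i j + A j i) * (x j + z j) := by
  have hline : ∀ α : ℝ, fderiv ℝ (quadratic A b c) (z + α • (x - z)) (Pi.single i 1)
      = (b i + ∑ j, (A i j + A j i) * z j) + α * ∑ j, (A i j + A j i) * (x j - z j) := by
    intro α
    rw [fderiv_quadratic_apply_single, add_assoc, mul_sum, ← sum_add_distrib]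
    congr 1
    refine sum_congr rfl fun j _ => ?_
    simp only [Pi.add_apply, Pi.smul_apply, Pi.sub_apply, smul_eq_mul]
    ring
  simp only [hline]
  rw [intervalIntegral.integral_add intervalIntegrable_const
    ((continuous_mul_const _).intervalIntegrable _ _), intervalIntegral.integral_const,
    intervalIntegral.integral_mul_const, integral_id]
  have hsum : ∑ j, (A i j + A j i) * (x j + z j)
      = 2 * ∑ j, (A i j + A j i) * z j + ∑ j, (A i j + A j i) * (x j - z j) := by
    rw [mul_sum, ← sum_add_distrib]
    exact sum_congr rfl fun j _ => by ring
  rw [hsum]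
  ring

end Quadratic

lemma memLp_piecewise_pi {ι : Type*} [Fintype ι] [DecidableEq ι] {μ : ι → Measure ℝ}
    [∀ i, IsProbabilityMeasure (μ i)] (hμ : ∀ j, Integrable (fun t : ℝ => t ^ 2) (μ j))
    (T : Finset ι) (x : ι → ℝ) (j : ι) :
    MemLp (fun z => T.piecewise x z j) 2 (Measure.pi μ) := by
  by_cases hj : j ∈ T
  · simp only [piecewise_eq_of_mem _ _ _ hj]
    exact memLp_const _
  · simp only [piecewise_eq_of_notMem _ _ _ hj]
    exact ((memLp_two_iff_integrable_sq aestronglyMeasurable_id).2 (hμ j)).comp_measurePreserving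
      (measurePreserving_eval μ j)

theorem stmt_7_general (M : ℕ) (μ : Fin M → Measure ℝ) [∀ i, IsProbabilityMeasure (μ i)]
    (hmom : ∀ i, Integrable (fun z : ℝ => z ^ 2) (μ i))
    (A : Matrix (Fin M) (Fin M) ℝ) (b : Fin M → ℝ) (c : ℝ)
    (f : (Fin M → ℝ) → ℝ)
    (hf : ∀ x : Fin M → ℝ,
      f x = c + ∑ i : Fin M, b i * x i + ∑ i : Fin M, ∑ j : Fin M, A i j * x i * x j)
    (xt : Fin M → ℝ)
    (v : Finset (Fin M) → ℝ)
    (hv : ∀ T : Finset (Fin M),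
      v T = ∫ z : Fin M → ℝ, f (fun j => if j ∈ T then xt j else z j) ∂(Measure.pi μ))
    (SV EIG : Fin M → ℝ)
    (hSV : ∀ i : Fin M,
      SV i = (1 / M : ℝ) * ∑ k ∈ Finset.range M, ((M - 1).choose k : ℝ)⁻¹ *
        ∑ S ∈ (Finset.univ.erase i).powerset.filter (fun S => S.card = k),
          (v (insert i S) - v S))
    (hEIG : ∀ i : Fin M,
      EIG i = ∫ z : Fin M → ℝ,
        (xt i - z i) *
          (∫ α in (0:ℝ)..1, fderiv ℝ f (z + α • (xt - z)) (Pi.single i 1))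
        ∂(Measure.pi μ)) :
    ∀ i : Fin M, SV i = EIG i := by
  intro i
  obtain rfl : f = quadratic A b c := funext hf
  have hv' : v = fun T => ∫ z, quadratic A b c (T.piecewise xt z) ∂(Measure.pi μ) := funext hv
  have hSV' : SV i = shapleyValue v i := by rw [hSV, shapleyValue, Fintype.card_fin]
  rw [hSV', hv', shapleyValue_integral _ (fun T => integrable_quadratic_comp A b c
    (memLp_piecewise_pi hmom T xt)), hEIG]
  congr 1 with z
  rw [shapleyValue_quadratic_piecewise, integral_fderiv_quadratic_segment]

/-- For a quadratic function `f(x) = c + bᵀx + xᵀAx` (with `A` symmetric) and a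
product probability measure `P = ⊗ᵢ μᵢ` with finite second moments, the
conditional-expectation Shapley value equals the expected integrated gradient:
`SVᵢ(xᵗ) = EIGᵢ(xᵗ)` for every variable `i` and every test point `xᵗ`. -/
theorem stmt_7 (M : ℕ) (μ : Fin M → Measure ℝ) [∀ i, IsProbabilityMeasure (μ i)]
    (hmom : ∀ i, Integrable (fun z : ℝ => z ^ 2) (μ i))
    (A : Matrix (Fin M) (Fin M) ℝ) (hA : A.IsSymm) (b : Fin M → ℝ) (c : ℝ)
    (f : (Fin M → ℝ) → ℝ)
    (hf : ∀ x : Fin M → ℝ,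
      f x = c + ∑ i : Fin M, b i * x i + ∑ i : Fin M, ∑ j : Fin M, A i j * x i * x j)
    (xt : Fin M → ℝ)
    (v : Finset (Fin M) → ℝ)
    (hv : ∀ T : Finset (Fin M),
      v T = ∫ z : Fin M → ℝ, f (fun j => if j ∈ T then xt j else z j) ∂(Measure.pi μ))
    (SV EIG : Fin M → ℝ)
    (hSV : ∀ i : Fin M,
      SV i = (1 / M : ℝ) * ∑ k ∈ Finset.range M, ((M - 1).choose k : ℝ)⁻¹ *
        ∑ S ∈ (Finset.univ.erase i).powerset.filter (fun S => S.card = k),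
          (v (insert i S) - v S))
    (hEIG : ∀ i : Fin M,
      EIG i = ∫ z : Fin M → ℝ,
        (xt i - z i) *
          (∫ α in (0:ℝ)..1, fderiv ℝ f (z + α • (xt - z)) (Pi.single i 1))
        ∂(Measure.pi μ)) :
    ∀ i : Fin M, SV i = EIG i :=
  stmt_7_general M μ hmom A b c f hf xt v hv SV EIG hSV hEIG
end

section
/- Let f(x₁, x₂) = 2 cos(πx₁) cos(πx₂) and let x^t, x⁰ ∈ ℝ² with d₁ = x₁^t − x₁⁰, d₂ = x₂^t − x₂⁰ satisfying d₁ + d₂ ≠ 0 and d₁ − d₂ ≠ 0. Then the integrated gradients admit the closed form IG_i(x^t | x⁰) = d_i [ G^t − G⁰ − (−1)^i (H^t − H⁰) ] for i = 1, 2, where G^k = cos(π(x₁^k + x₂^k)) / (d₁ + d₂) and H^k = cos(π(x₁^k − x₂^k)) / (d₁ − d₂) for k ∈ {t, 0}. -/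
/-!
Along the segment from `x⁰` to `xᵗ`, `∂f/∂x₁ = -2π sin(πx₁) cos(πx₂)`. The product-to-sum formula
splits it into `-π sin(π(x₁ + x₂)) - π sin(π(x₁ - x₂))`, and on the segment `x₁ ± x₂` is affine in
`α` with slope `d₁ ± d₂`, so an antiderivative in `α` is
`cos(π(x₁ + x₂)) / (d₁ + d₂) + cos(π(x₁ - x₂)) / (d₁ - d₂)`. The second coordinate is symmetric.
-/

open Real intervalIntegral

lemma hasDerivAt_affine (a p t : ℝ) : HasDerivAt (fun s => a + s * p) p t := by
  simpa using ((hasDerivAt_id t).mul_const p).const_add a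

lemma hasDerivAt_cos_pi_mul_div {g : ℝ → ℝ} {v t : ℝ} (hg : HasDerivAt g v t) (hv : v ≠ 0) :
    HasDerivAt (fun s => cos (π * g s) / v) (-π * sin (π * g t)) t := by
  refine ((hg.const_mul π).cos.div_const v).congr_deriv ?_
  field_simp

lemma deriv_two_cos_pi_mul_cos_pi_mul_left (a b : ℝ) :
    deriv (fun s => 2 * cos (π * s) * cos (π * b)) a = -2 * π * sin (π * a) * cos (π * b) := by
  have h := (((hasDerivAt_id a).const_mul π).cos.const_mul 2).mul_const (cos (π * b))
  simp only [id, mul_one] at h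
  rw [h.deriv]
  ring

lemma deriv_two_cos_pi_mul_cos_pi_mul_right (a b : ℝ) :
    deriv (fun s => 2 * cos (π * a) * cos (π * s)) b = -2 * π * sin (π * b) * cos (π * a) := by
  have h := ((hasDerivAt_id b).const_mul π).cos.const_mul (2 * cos (π * a))
  simp only [id, mul_one] at h
  rw [h.deriv]
  ring

lemma integral_sin_pi_mul_cos_pi_mul_segment (a b u v : ℝ)
    (hplus : (u - a) + (v - b) ≠ 0) (hminus : (u - a) - (v - b) ≠ 0) :
    ∫ α in (0 : ℝ)..1, -2 * π * sin (π * (a + α * (u - a))) * cos (π * (b + α * (v - b)))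
      = (cos (π * (u + v)) - cos (π * (a + b))) / ((u - a) + (v - b))
        + (cos (π * (u - v)) - cos (π * (a - b))) / ((u - a) - (v - b)) := by
  set p := u - a
  set q := v - b
  have hF : ∀ α ∈ Set.uIcc (0 : ℝ) 1,
      HasDerivAt (fun t => cos (π * ((a + t * p) + (b + t * q))) / (p + q)
          + cos (π * ((a + t * p) - (b + t * q))) / (p - q))
        (-2 * π * sin (π * (a + α * p)) * cos (π * (b + α * q))) α := by
    intro α _
    have hx := hasDerivAt_affine a p α
    have hy := hasDerivAt_affine b q α
    refine ((hasDerivAt_cos_pi_mul_div (hx.add hy) hplus).add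
      (hasDerivAt_cos_pi_mul_div (hx.sub hy) hminus)).congr_deriv ?_
    simp only [Pi.add_apply, Pi.sub_apply]
    rw [mul_add π, mul_sub π, sin_add, sin_sub]
    ring
  have hint : IntervalIntegrable
      (fun α => -2 * π * sin (π * (a + α * p)) * cos (π * (b + α * q))) MeasureTheory.volume 0 1 :=
    (by fun_prop : Continuous _).intervalIntegrable 0 1
  rw [integral_eq_sub_of_hasDerivAt hF hint]
  simp only [p, q, one_mul, zero_mul, add_zero, add_sub_cancel]
  ring

lemma cos_pi_mul_sub_comm (x y : ℝ) : cos (π * (x - y)) = cos (π * (y - x)) := by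
  rw [← cos_neg, ← mul_neg, neg_sub]

/-- Closed-form integrated gradients for the 2D sinusoidal benchmark
`f(x₁,x₂) = 2 cos(πx₁) cos(πx₂)`: with `d₁ = x₁ᵗ − x₁⁰`, `d₂ = x₂ᵗ − x₂⁰`,
`d₁ + d₂ ≠ 0`, `d₁ − d₂ ≠ 0`, one has
`IGᵢ(xᵗ | x⁰) = dᵢ [Gᵗ − G⁰ − (−1)ⁱ (Hᵗ − H⁰)]` for `i = 1, 2`. -/
theorem stmt_13 (f : ℝ → ℝ → ℝ)
    (hf : ∀ a b : ℝ, f a b = 2 * Real.cos (Real.pi * a) * Real.cos (Real.pi * b))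
    (xt1 xt2 x01 x02 d1 d2 : ℝ) (hd1 : d1 = xt1 - x01) (hd2 : d2 = xt2 - x02)
    (h1 : d1 + d2 ≠ 0) (h2 : d1 - d2 ≠ 0)
    (Gt G0 Ht H0 : ℝ)
    (hGt : Gt = Real.cos (Real.pi * (xt1 + xt2)) / (d1 + d2))
    (hG0 : G0 = Real.cos (Real.pi * (x01 + x02)) / (d1 + d2))
    (hHt : Ht = Real.cos (Real.pi * (xt1 - xt2)) / (d1 - d2))
    (hH0 : H0 = Real.cos (Real.pi * (x01 - x02)) / (d1 - d2)) :
    ((xt1 - x01) *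
        (∫ α in (0:ℝ)..1,
          deriv (fun s => f s (x02 + α * (xt2 - x02))) (x01 + α * (xt1 - x01)))
      = d1 * (Gt - G0 - (-1 : ℝ) ^ (1 : ℕ) * (Ht - H0))) ∧
    ((xt2 - x02) *
        (∫ α in (0:ℝ)..1,
          deriv (fun s => f (x01 + α * (xt1 - x01)) s) (x02 + α * (xt2 - x02)))
      = d2 * (Gt - G0 - (-1 : ℝ) ^ (2 : ℕ) * (Ht - H0))) := by
  subst hd1 hd2 hGt hG0 hHt hH0
  simp only [hf, deriv_two_cos_pi_mul_cos_pi_mul_left, deriv_two_cos_pi_mul_cos_pi_mul_right]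
  have h2' : (xt2 - x02) - (xt1 - x01) ≠ 0 := by rwa [← neg_sub, neg_ne_zero]
  rw [integral_sin_pi_mul_cos_pi_mul_segment x01 x02 xt1 xt2 h1 h2,
    integral_sin_pi_mul_cos_pi_mul_segment x02 x01 xt2 xt1 (by rwa [add_comm]) h2',
    add_comm xt2, add_comm x02, add_comm (xt2 - x02), cos_pi_mul_sub_comm xt2,
    cos_pi_mul_sub_comm x02, ← neg_sub (xt1 - x01)]
  constructor
  · ring
  · field_simp
    ring
end
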